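/- arXiv:1502.04520 — 2 statements merged into one kernel-verified Lean document; each statement's English description precedes it below -/
import Mathlib

section
/- Let 𝒜 be an operator algebra with a bounded approximate unit and π : 𝒜 → B(H) a bounded algebra homomorphism into the bounded operators on a complex Hilbert space H. Then H is the (in general non-orthogonal) topological direct sum of the closed subspace [π(𝒜)H] (the closed linear span of {π(a)h : a ∈ 𝒜, h ∈ H}) and the closed subspace [π(𝒜)*H]^⊥ (the orthogonal complement of the closed linear span of {π(a)*h : a ∈ 𝒜, h ∈ H}); that is, these two closed subspaces intersect trivially and their sum is all of H. -/
/-!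
Write `P_λ = π(u_λ)`, a bounded net of operators. On `[π(𝒜)H]` it converges strongly to the
identity (it does so on the vectors `π(a)h`, and the net is equicontinuous), while it vanishes on
`[π(𝒜)*H]^⊥ = ⋂ₐ ker π(a)`; hence the two subspaces meet only in `0`. For an arbitrary `x`, the
bounded net `P_λ x` has a weak cluster point `p` (Banach–Alaoglu along an ultrafilter). As a weak
limit of vectors of `[π(𝒜)H]`, `p` lies in it, and `π(a)p` is the weak limit of
`π(a u_λ)x → π(a)x`, so `x - p ∈ ⋂ₐ ker π(a)`.
-/

open Filter Topology Submodule ContinuousLinearMap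
open scoped InnerProductSpace

section WeakLimits

variable {𝕜 E ι : Type*} [RCLike 𝕜] [NormedAddCommGroup E] [InnerProductSpace 𝕜 E]
  [CompleteSpace E]

theorem Submodule.mem_topologicalClosure_of_tendsto_inner {K : Submodule 𝕜 E}
    {l : Filter ι} [l.NeBot] {v : ι → E} {p : E} (hv : ∀ i, v i ∈ K)
    (hp : ∀ y, Tendsto (fun i => ⟪v i, y⟫_𝕜) l (𝓝 ⟪p, y⟫_𝕜)) : p ∈ K.topologicalClosure := by
  rw [← orthogonal_orthogonal_eq_closure, mem_orthogonal']
  intro r hr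
  exact tendsto_nhds_unique (hp r) (tendsto_const_nhds.congr fun i =>
    (inner_right_of_mem_orthogonal (hv i) hr).symm)

theorem exists_tendsto_inner_of_norm_le (U : Ultrafilter ι) {v : ι → E} {R : ℝ}
    (hv : ∀ i, ‖v i‖ ≤ R) : ∃ p, ∀ y, Tendsto (fun i => ⟪v i, y⟫_𝕜) U (𝓝 ⟪p, y⟫_𝕜) := by
  let w : ι → WeakDual 𝕜 E := fun i => StrongDual.toWeakDual (InnerProductSpace.toDual 𝕜 E (v i))
  have hw : (U.map w : Filter (WeakDual 𝕜 E)) ≤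
      𝓟 (WeakDual.toStrongDual ⁻¹' Metric.closedBall 0 R) :=
    le_principal_iff.mpr <| mem_map.mpr <| Eventually.of_forall (f := (U : Filter ι))
      fun i => by simpa [w] using hv i
  obtain ⟨φ, -, hφ⟩ := (WeakDual.isCompact_closedBall 0 R).ultrafilter_le_nhds _ hw
  refine ⟨(InnerProductSpace.toDual 𝕜 E).symm (WeakDual.toStrongDual φ), fun y => ?_⟩
  rw [InnerProductSpace.toDual_symm_apply]
  exact (WeakDual.eval_continuous y).continuousAt.tendsto.comp hφ

end WeakLimits

theorem tendsto_apply_self_of_mem_closure_span {𝕜 E ι : Type*} [NontriviallyNormedField 𝕜]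
    [NormedAddCommGroup E] [NormedSpace 𝕜 E] {P : ι → E →L[𝕜] E} {C : ℝ} (hP : ∀ i, ‖P i‖ ≤ C)
    {l : Filter ι} {s : Set E} (hs : ∀ x ∈ s, Tendsto (fun i => P i x) l (𝓝 x)) {x : E}
    (hx : x ∈ (span 𝕜 s).topologicalClosure) : Tendsto (fun i => P i x) l (𝓝 x) := by
  have hbdd : ∃ C, ∀ i, ‖P i‖ ≤ C := ⟨C, hP⟩
  have hequi : Equicontinuous ((↑) ∘ P) := ((NormedSpace.equicontinuous_TFAE P).out 5 1).mp hbdd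
  have hclosed : IsClosed {x | Tendsto (fun i => P i x) l (𝓝 x)} :=
    hequi.isClosed_setOfPred_tendsto continuous_id
  refine closure_minimal (fun y hy => ?_) hclosed hx
  induction hy using span_induction with
  | mem y hy => exact hs y hy
  | zero => simpa using tendsto_const_nhds
  | add y z _ _ hy hz => simpa using hy.add hz
  | smul c y _ hy => simpa using hy.const_smul c

section EssentialSubspace

variable {𝕜 E α ι : Type*} [RCLike 𝕜] [NormedAddCommGroup E] [InnerProductSpace 𝕜 E]

def essentialSubspace (T : α → E →L[𝕜] E) : Submodule 𝕜 E :=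
  (span 𝕜 {x | ∃ a h, T a h = x}).topologicalClosure

variable [CompleteSpace E]

theorem mem_orthogonal_essentialSubspace_adjoint_iff (T : α → E →L[𝕜] E) (z : E) :
    z ∈ (essentialSubspace fun a => adjoint (T a))ᗮ ↔ ∀ a, T a z = 0 := by
  rw [essentialSubspace, orthogonal_closure, mem_orthogonal']
  constructor
  · intro hz a
    have := hz _ (subset_span ⟨a, T a z, rfl⟩)
    rwa [adjoint_inner_right, inner_self_eq_zero] at this
  · intro hz u hu
    suffices span 𝕜 _ ≤ LinearMap.ker (innerₛₗ 𝕜 z) from this hu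
    rw [span_le]
    rintro _ ⟨a, h, rfl⟩
    simp [adjoint_inner_right, hz a]

variable {T : α → E →L[𝕜] E} {u : ι → α} {l : Filter ι} [l.NeBot] {C : ℝ}

theorem essentialSubspace_inf_orthogonal_adjoint_eq_bot (hC : ∀ i, ‖T (u i)‖ ≤ C)
    (hleft : ∀ a x, Tendsto (fun i => T (u i) (T a x)) l (𝓝 (T a x))) :
    essentialSubspace T ⊓ (essentialSubspace fun a => adjoint (T a))ᗮ = ⊥ := by
  rw [Submodule.eq_bot_iff]
  rintro x ⟨hx, hx'⟩
  have hlim : Tendsto (fun i => T (u i) x) l (𝓝 x) :=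
    tendsto_apply_self_of_mem_closure_span hC (by rintro _ ⟨a, h, rfl⟩; exact hleft a h) hx
  have hzero : ∀ i, T (u i) x = 0 := fun i =>
    (mem_orthogonal_essentialSubspace_adjoint_iff T x).mp hx' (u i)
  simp only [hzero] at hlim
  exact tendsto_nhds_unique hlim tendsto_const_nhds

theorem essentialSubspace_sup_orthogonal_adjoint_eq_top (hC : ∀ i, ‖T (u i)‖ ≤ C)
    (hright : ∀ a x, Tendsto (fun i => T a (T (u i) x)) l (𝓝 (T a x))) :
    essentialSubspace T ⊔ (essentialSubspace fun a => adjoint (T a))ᗮ = ⊤ := by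
  rw [eq_top_iff']
  intro x
  obtain ⟨p, hp⟩ := exists_tendsto_inner_of_norm_le (𝕜 := 𝕜) (Ultrafilter.of l)
    (v := fun i => T (u i) x) fun i => (T (u i)).le_of_opNorm_le (hC i) x
  have hpS : p ∈ essentialSubspace T :=
    mem_topologicalClosure_of_tendsto_inner (fun i => subset_span ⟨u i, x, rfl⟩) hp
  have hTp : ∀ a, T a p = T a x := fun a => ext_inner_right 𝕜 fun y => by
    have hweak : Tendsto (fun i => ⟪T a (T (u i) x), y⟫_𝕜) (Ultrafilter.of l) (𝓝 ⟪T a p, y⟫_𝕜) := by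
      simpa only [adjoint_inner_right] using hp (adjoint (T a) y)
    exact tendsto_nhds_unique hweak
      (((hright a x).mono_left (Ultrafilter.of_le l)).inner tendsto_const_nhds)
  have hxp : x - p ∈ (essentialSubspace fun a => adjoint (T a))ᗮ :=
    (mem_orthogonal_essentialSubspace_adjoint_iff T _).mpr fun a => by rw [map_sub, hTp, sub_self]
  simpa using add_mem_sup hpS hxp

end EssentialSubspace

theorem statement1_general
    {H₀ H : Type*} [NormedAddCommGroup H₀] [InnerProductSpace ℂ H₀]
    [NormedAddCommGroup H] [InnerProductSpace ℂ H] [CompleteSpace H]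
    -- the operator algebra 𝒜 : a closed (not necessarily unital) subalgebra of B(H₀)
    (A : NonUnitalSubalgebra ℂ (H₀ →L[ℂ] H₀))
    -- a bounded approximate unit (u_λ), indexed by a directed set ι
    {ι : Type*} [Preorder ι] [IsDirected ι (· ≤ ·)] [Nonempty ι]
    (u : ι → A) (C : ℝ) (huC : ∀ l, ‖u l‖ ≤ C)
    (hu_left : ∀ a : A, Tendsto (fun l => ‖u l * a - a‖) atTop (𝓝 0))
    (hu_right : ∀ a : A, Tendsto (fun l => ‖a * u l - a‖) atTop (𝓝 0))
    -- a bounded (continuous linear, multiplicative) representation π : 𝒜 → B(H)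
    (π : A →L[ℂ] (H →L[ℂ] H)) (hπ : ∀ a b : A, π (a * b) = π a * π b) :
    -- S₁ = [π(𝒜)H],  S₂ = [π(𝒜)*H]^⊥
    (Submodule.span ℂ {x : H | ∃ (a : A) (h : H), π a h = x}).topologicalClosure ⊓
      ((Submodule.span ℂ
        {x : H | ∃ (a : A) (h : H), ContinuousLinearMap.adjoint (π a) h = x}).topologicalClosure)ᗮ
      = ⊥ ∧
    (Submodule.span ℂ {x : H | ∃ (a : A) (h : H), π a h = x}).topologicalClosure ⊔
      ((Submodule.span ℂ
        {x : H | ∃ (a : A) (h : H), ContinuousLinearMap.adjoint (π a) h = x}).topologicalClosure)ᗮ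
      = ⊤ := by
  -- Pinning the inferred norm of `A` lets instance search find the operator norm of `π`.
  let _ : SeminormedAddCommGroup A := inferInstance
  let _ : NormedSpace ℂ A := { norm_smul_le := fun c a => norm_smul_le c (a : H₀ →L[ℂ] H₀) }
  have hbound : ∀ l, ‖π (u l)‖ ≤ ‖π‖ * C := fun l => (π.le_opNorm _).trans (by gcongr; exact huC l)
  have hπ_apply : ∀ {f : ι → A} {a : A}, Tendsto (fun l => ‖f l - a‖) atTop (𝓝 0) →
      ∀ h, Tendsto (fun l => π (f l) h) atTop (𝓝 (π a h)) := fun hf h =>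
    (((apply ℂ H h).continuous.comp π.continuous).tendsto _).comp
      (tendsto_iff_norm_sub_tendsto_zero.mpr hf)
  exact ⟨essentialSubspace_inf_orthogonal_adjoint_eq_bot (T := fun a : A => π a) hbound
      fun a h => by simpa [hπ] using hπ_apply (hu_left a) h,
    essentialSubspace_sup_orthogonal_adjoint_eq_top (T := fun a : A => π a) hbound
      fun a x => by simpa [hπ] using hπ_apply (hu_right a) x⟩

/-- Let `𝒜` be an operator algebra with a bounded approximate unit and
`π : 𝒜 → B(H)` a bounded algebra homomorphism into the bounded operators on a complex
Hilbert space `H`.  Then `H` is the (in general non-orthogonal) topological direct sum of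
the closed subspace `[π(𝒜)H]` (the closed linear span of `{π(a)h}`) and the closed subspace
`[π(𝒜)*H]^⊥`: these two closed subspaces intersect trivially and their sum is all of `H`. -/
theorem statement1
    {H₀ H : Type*} [NormedAddCommGroup H₀] [InnerProductSpace ℂ H₀] [CompleteSpace H₀]
    [NormedAddCommGroup H] [InnerProductSpace ℂ H] [CompleteSpace H]
    -- the operator algebra 𝒜 : a closed (not necessarily unital) subalgebra of B(H₀)
    (A : NonUnitalSubalgebra ℂ (H₀ →L[ℂ] H₀)) (hA : IsClosed (A : Set (H₀ →L[ℂ] H₀)))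
    -- a bounded approximate unit (u_λ), indexed by a directed set ι
    {ι : Type*} [Preorder ι] [IsDirected ι (· ≤ ·)] [Nonempty ι]
    (u : ι → A) (C : ℝ) (huC : ∀ l, ‖u l‖ ≤ C)
    (hu_left : ∀ a : A, Tendsto (fun l => ‖u l * a - a‖) atTop (𝓝 0))
    (hu_right : ∀ a : A, Tendsto (fun l => ‖a * u l - a‖) atTop (𝓝 0))
    -- a bounded (continuous linear, multiplicative) representation π : 𝒜 → B(H)
    (π : A →L[ℂ] (H →L[ℂ] H)) (hπ : ∀ a b : A, π (a * b) = π a * π b) :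
    -- S₁ = [π(𝒜)H],  S₂ = [π(𝒜)*H]^⊥
    (Submodule.span ℂ {x : H | ∃ (a : A) (h : H), π a h = x}).topologicalClosure ⊓
      ((Submodule.span ℂ
        {x : H | ∃ (a : A) (h : H), ContinuousLinearMap.adjoint (π a) h = x}).topologicalClosure)ᗮ
      = ⊥ ∧
    (Submodule.span ℂ {x : H | ∃ (a : A) (h : H), π a h = x}).topologicalClosure ⊔
      ((Submodule.span ℂ
        {x : H | ∃ (a : A) (h : H), ContinuousLinearMap.adjoint (π a) h = x}).topologicalClosure)ᗮ
      = ⊤ :=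
  statement1_general A u C huC hu_left hu_right π hπ
end

section
/- Let D be a closed symmetric densely defined operator on a complex Hilbert space H, and let 𝒜 ⊆ B(H) be a subalgebra closed under adjoints such that every a ∈ 𝒜 maps Dom D* into Dom D and the commutator [D*,a] := Da − aD*, defined on Dom D*, is bounded. Assume the linear span of {ah : a ∈ 𝒜, h ∈ H} is dense in H. If there is a sequence (u_n) in 𝒜 with sup_n (‖u_n‖ + ‖[D*,u_n]‖) < ∞ such that for every a ∈ 𝒜: ‖u_na − a‖ → 0, ‖au_n − a‖ → 0, ‖[D*, u_na − a]‖ → 0 and ‖[D*, au_n − a]‖ → 0, then D is self-adjoint: Dom D* = Dom D and D* = D. -/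
set_option synthInstance.maxHeartbeats 1000000
set_option maxHeartbeats 1000000

open Filter Topology
open scoped Classical

/-- Application of a partially defined operator, with junk value `0` off the domain. -/
noncomputable def pApply {H : Type*} [NormedAddCommGroup H] [InnerProductSpace ℂ H]
    (D : H →ₗ.[ℂ] H) (x : H) : H :=
  if hm : x ∈ D.domain then D ⟨x, hm⟩ else 0

lemma pApply_mem {H : Type*} [NormedAddCommGroup H] [InnerProductSpace ℂ H]
    (D : H →ₗ.[ℂ] H) {x : H} (hx : x ∈ D.domain) : pApply D x = D ⟨x, hx⟩ :=
  dif_pos hx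

lemma pApply_zero {H : Type*} [NormedAddCommGroup H] [InnerProductSpace ℂ H]
    (D : H →ₗ.[ℂ] H) : pApply D 0 = 0 := by
  rw [pApply_mem D (zero_mem _)]
  exact D.map_zero

lemma pApply_add {H : Type*} [NormedAddCommGroup H] [InnerProductSpace ℂ H]
    (D : H →ₗ.[ℂ] H) {x y : H} (hx : x ∈ D.domain) (hy : y ∈ D.domain) :
    pApply D (x + y) = pApply D x + pApply D y := by
  rw [pApply_mem D (add_mem hx hy), pApply_mem D hx, pApply_mem D hy]
  have : (⟨x + y, add_mem hx hy⟩ : D.domain) = ⟨x, hx⟩ + ⟨y, hy⟩ := rfl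
  rw [this, D.map_add]

lemma pApply_sub {H : Type*} [NormedAddCommGroup H] [InnerProductSpace ℂ H]
    (D : H →ₗ.[ℂ] H) {x y : H} (hx : x ∈ D.domain) (hy : y ∈ D.domain) :
    pApply D (x - y) = pApply D x - pApply D y := by
  rw [pApply_mem D (sub_mem hx hy), pApply_mem D hx, pApply_mem D hy]
  have : (⟨x - y, sub_mem hx hy⟩ : D.domain) = ⟨x, hx⟩ - ⟨y, hy⟩ := rfl
  rw [this, D.map_sub]

lemma pApply_smul {H : Type*} [NormedAddCommGroup H] [InnerProductSpace ℂ H]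
    (D : H →ₗ.[ℂ] H) (c : ℂ) {x : H} (hx : x ∈ D.domain) :
    pApply D (c • x) = c • pApply D x := by
  rw [pApply_mem D (Submodule.smul_mem _ c hx), pApply_mem D hx]
  have : (⟨c • x, Submodule.smul_mem _ c hx⟩ : D.domain) = c • ⟨x, hx⟩ := rfl
  rw [this, D.map_smul]

lemma tendsto_zero_of_approx {H : Type*} [NormedAddCommGroup H] (v : ℕ → H)
    (h : ∀ ε : ℝ, 0 < ε → ∃ w : ℕ → H, Tendsto w atTop (𝓝 0) ∧ ∀ n, ‖v n - w n‖ ≤ ε) :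
    Tendsto v atTop (𝓝 0) := by
  rw [NormedAddCommGroup.tendsto_nhds_zero]
  intro ε hε
  obtain ⟨w, hw, hb⟩ := h (ε / 2) (by positivity)
  have hw2 := (NormedAddCommGroup.tendsto_nhds_zero.mp hw) (ε / 2) (by positivity)
  filter_upwards [hw2] with n hn
  calc ‖v n‖ = ‖(v n - w n) + w n‖ := by congr 1; abel
    _ ≤ ‖v n - w n‖ + ‖w n‖ := norm_add_le _ _
    _ < ε / 2 + ε / 2 := add_lt_add_of_le_of_lt (hb n) hn
    _ = ε := by ring

/-- Let `D` be a closed symmetric densely defined operator on a complex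
Hilbert space `H`, and `𝒜 ⊆ B(H)` a subalgebra closed under adjoints such that every
`a ∈ 𝒜` maps `Dom D*` into `Dom D` with bounded commutator `[D*,a] := Da − aD*` on
`Dom D*`.  Assume the linear span of `{ah : a ∈ 𝒜, h ∈ H}` is dense in `H`.  If there
is a sequence `(u_n)` in `𝒜`, uniformly bounded together with its commutators, which is
an approximate unit for `𝒜` in the Lipschitz sense, then `D` is self-adjoint:
`Dom D* = Dom D` and `D* = D`. -/
theorem statement5
    {H : Type*} [NormedAddCommGroup H] [InnerProductSpace ℂ H] [CompleteSpace H]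
    -- D closed, symmetric, densely defined
    (D : H →ₗ.[ℂ] H) (hdense : Dense (D.domain : Set H))
    (hclosed : D.IsClosed) (hsym : D ≤ D.adjoint)
    -- the *-closed subalgebra 𝒜 of B(H)
    (A : NonUnitalSubalgebra ℂ (H →L[ℂ] H))
    (hAstar : ∀ a ∈ A, ContinuousLinearMap.adjoint a ∈ A)
    -- each a ∈ 𝒜 maps Dom D* into Dom D, with bounded commutator [D*,a] = Da − aD*
    (hmap : ∀ a ∈ A, ∀ h ∈ D.adjoint.domain, a h ∈ D.domain)
    (hbddcomm : ∀ a ∈ A, ∃ M : ℝ, ∀ h : D.adjoint.domain,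
      ‖pApply D (a h) - a (D.adjoint h)‖ ≤ M * ‖(h : H)‖)
    -- 𝒜 acts nondegenerately
    (hnondeg :
      Dense ((Submodule.span ℂ {x : H | ∃ a ∈ A, ∃ h : H, a h = x} : Submodule ℂ H) : Set H))
    -- the sequence (u_n) in 𝒜, uniformly bounded together with its commutators
    (u : ℕ → H →L[ℂ] H) (hu : ∀ n, u n ∈ A)
    (C : ℝ)
    (huC : ∀ n, ‖u n‖ ≤ C ∧ ∀ h : D.adjoint.domain,
      ‖pApply D (u n (h : H)) - u n (D.adjoint h)‖ ≤ C * ‖(h : H)‖)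
    -- approximate unit conditions
    (hau_left : ∀ a ∈ A, Tendsto (fun n => ‖u n * a - a‖) atTop (𝓝 0))
    (hau_right : ∀ a ∈ A, Tendsto (fun n => ‖a * u n - a‖) atTop (𝓝 0))
    (hau_comm_left : ∀ a ∈ A, ∃ ε : ℕ → ℝ, Tendsto ε atTop (𝓝 0) ∧
      ∀ n, ∀ h : D.adjoint.domain,
        ‖pApply D ((u n * a - a) (h : H)) - (u n * a - a) (D.adjoint h)‖ ≤ ε n * ‖(h : H)‖)
    (hau_comm_right : ∀ a ∈ A, ∃ ε : ℕ → ℝ, Tendsto ε atTop (𝓝 0) ∧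
      ∀ n, ∀ h : D.adjoint.domain,
        ‖pApply D ((a * u n - a) (h : H)) - (a * u n - a) (D.adjoint h)‖ ≤ ε n * ‖(h : H)‖) :
    D.adjoint = D := by
  have hC0 : (0 : ℝ) ≤ C := le_trans (norm_nonneg _) (huC 0).1
  have hDsub : D.domain ≤ D.adjoint.domain := hsym.1
  -- Step 1: strong convergence of `u n` to the identity
  have hstrong : ∀ x : H, Tendsto (fun n => u n x - x) atTop (𝓝 0) := by
    have hP : ∀ s ∈ Submodule.span ℂ {x : H | ∃ a ∈ A, ∃ h : H, a h = x},
        Tendsto (fun n => u n s - s) atTop (𝓝 0) := by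
      intro s hs
      induction hs using Submodule.span_induction with
      | mem x hx =>
        obtain ⟨a, ha, h, rfl⟩ := hx
        have hb : ∀ n, ‖u n (a h) - a h‖ ≤ ‖u n * a - a‖ * ‖h‖ := by
          intro n
          have := (u n * a - a).le_opNorm h
          simpa [ContinuousLinearMap.sub_apply, ContinuousLinearMap.mul_apply] using this
        have hlim := (hau_left a ha).mul_const ‖h‖
        rw [zero_mul] at hlim
        exact squeeze_zero_norm hb hlim
      | zero => simpa using (tendsto_const_nhds : Tendsto (fun _ : ℕ => (0 : H)) atTop _)
      | add x y hx hy ihx ihy =>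
        have := ihx.add ihy
        rw [add_zero] at this
        refine this.congr fun n => ?_
        simp only [map_add]
        abel
      | smul c x hx ihx =>
        have := ihx.const_smul c
        rw [smul_zero] at this
        refine this.congr fun n => ?_
        simp only [map_smul, smul_sub]
    intro x
    apply tendsto_zero_of_approx
    intro ε hε
    obtain ⟨s, hsS, hs⟩ : ∃ s ∈ (Submodule.span ℂ {x : H | ∃ a ∈ A, ∃ h : H, a h = x}),
        ‖x - s‖ ≤ ε / (C + 1) := by
      have hx := hnondeg x
      rw [Metric.mem_closure_iff] at hx
      obtain ⟨s, hs1, hs2⟩ := hx (ε / (C + 1)) (by positivity)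
      exact ⟨s, hs1, by rw [← dist_eq_norm]; exact hs2.le⟩
    refine ⟨fun n => u n s - s, hP s hsS, fun n => ?_⟩
    have heq : (u n x - x) - (u n s - s) = u n (x - s) - (x - s) := by
      simp only [map_sub]; abel
    rw [heq]
    calc ‖u n (x - s) - (x - s)‖ ≤ ‖u n (x - s)‖ + ‖x - s‖ := norm_sub_le _ _
      _ ≤ ‖u n‖ * ‖x - s‖ + ‖x - s‖ := by
          gcongr; exact (u n).le_opNorm _
      _ ≤ C * ‖x - s‖ + ‖x - s‖ := by gcongr; exact (huC n).1
      _ = (C + 1) * ‖x - s‖ := by ring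
      _ ≤ (C + 1) * (ε / (C + 1)) := by gcongr
      _ = ε := by field_simp
  have hstrong' : ∀ x : H, Tendsto (fun n => u n x) atTop (𝓝 x) := by
    intro x
    have := (hstrong x).add (tendsto_const_nhds (x := x))
    rw [zero_add] at this
    exact this.congr fun n => by abel
  -- The dense submodule generated by `a k` with `k ∈ Dom D*`
  set Kgen : Set H := {x : H | ∃ a ∈ A, ∃ k : D.adjoint.domain, a ↑k = x} with hKgen
  set K := Submodule.span ℂ Kgen with hKdef
  have hKdense : Dense (K : Set H) := by
    have h1 : {x : H | ∃ a ∈ A, ∃ h : H, a h = x} ⊆ closure (K : Set H) := by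
      rintro x ⟨a, ha, h, rfl⟩
      have hd : Dense (D.adjoint.domain : Set H) := hdense.mono hDsub
      have hmemc : a h ∈ a '' closure (D.adjoint.domain : Set H) :=
        ⟨h, by rw [hd.closure_eq]; trivial, rfl⟩
      have h2 := (image_closure_subset_closure_image a.continuous) hmemc
      refine closure_mono ?_ h2
      rintro y ⟨k, hk, rfl⟩
      exact Submodule.subset_span ⟨a, ha, ⟨k, hk⟩, rfl⟩
    have h2 : (Submodule.span ℂ {x : H | ∃ a ∈ A, ∃ h : H, a h = x} : Set H)
        ⊆ closure (K : Set H) := by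
      rw [← Submodule.topologicalClosure_coe]
      exact Submodule.span_le.mpr h1
    rw [dense_iff_closure_eq]
    apply Set.eq_univ_of_univ_subset
    calc (Set.univ : Set H)
        = closure (Submodule.span ℂ {x : H | ∃ a ∈ A, ∃ h : H, a h = x} : Set H) :=
          hnondeg.closure_eq.symm
      _ ⊆ closure (closure (K : Set H)) := closure_mono h2
      _ = closure (K : Set H) := closure_closure
  -- the commutator-type expression
  set ψ : ℕ → H → H := fun n x => pApply D (u n x) - u n (pApply D.adjoint x) with hψdef
  have hpadj : ∀ h : D.adjoint.domain, pApply D.adjoint ↑h = D.adjoint h := by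
    intro h
    rw [pApply_mem D.adjoint h.2]
  have hDeqadj : ∀ (x : H) (hx : x ∈ D.domain), pApply D.adjoint x = pApply D x := by
    intro x hx
    rw [pApply_mem D hx, pApply_mem D.adjoint (hDsub hx)]
    exact (hsym.2 (x := ⟨x, hx⟩) (y := ⟨x, hDsub hx⟩) rfl).symm
  have hψ_bound : ∀ n, ∀ x, ∀ hx : x ∈ D.adjoint.domain, ‖ψ n x‖ ≤ C * ‖x‖ := by
    intro n x hx
    have := (huC n).2 ⟨x, hx⟩
    simpa [hψdef, hpadj ⟨x, hx⟩] using this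
  have hψ_sub : ∀ n, ∀ x y, x ∈ D.adjoint.domain → y ∈ D.adjoint.domain →
      ψ n (x - y) = ψ n x - ψ n y := by
    intro n x y hx hy
    simp only [hψdef]
    rw [map_sub (u n), pApply_sub D (hmap _ (hu n) _ hx) (hmap _ (hu n) _ hy),
      pApply_sub D.adjoint hx hy, map_sub (u n)]
    abel
  have hψ_add : ∀ n, ∀ x y, x ∈ D.adjoint.domain → y ∈ D.adjoint.domain →
      ψ n (x + y) = ψ n x + ψ n y := by
    intro n x y hx hy
    simp only [hψdef]
    rw [map_add (u n), pApply_add D (hmap _ (hu n) _ hx) (hmap _ (hu n) _ hy),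
      pApply_add D.adjoint hx hy, map_add (u n)]
    abel
  have hψ_smul : ∀ n, ∀ (c : ℂ), ∀ x, x ∈ D.adjoint.domain →
      ψ n (c • x) = c • ψ n x := by
    intro n c x hx
    simp only [hψdef]
    rw [map_smul (u n), pApply_smul D c (hmap _ (hu n) _ hx),
      pApply_smul D.adjoint c hx, map_smul (u n), smul_sub]
  -- generator convergence
  have hgen : ∀ a ∈ A, ∀ k : D.adjoint.domain, Tendsto (fun n => ψ n (a ↑k)) atTop (𝓝 0) := by
    intro a ha k
    obtain ⟨ε, hε0, hεb⟩ := hau_comm_left a ha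
    set w : H := pApply D (a ↑k) - a (D.adjoint k) with hw
    have hmemak : (a ↑k) ∈ D.domain := hmap a ha ↑k k.2
    have key : ∀ n, ψ n (a ↑k) =
        (pApply D ((u n * a - a) ↑k) - (u n * a - a) (D.adjoint k)) + (w - u n w) := by
      intro n
      have hmembn : ((u n * a - a) : H →L[ℂ] H) ↑k ∈ D.domain :=
        hmap _ (A.sub_mem (A.mul_mem (hu n) ha) ha) _ k.2
      have hsplit : u n (a ↑k) = ((u n * a - a) : H →L[ℂ] H) ↑k + a ↑k := by
        simp [ContinuousLinearMap.sub_apply, ContinuousLinearMap.mul_apply]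
      simp only [hψdef]
      rw [hsplit, pApply_add D hmembn hmemak, hDeqadj _ hmemak, hw]
      simp only [ContinuousLinearMap.sub_apply, ContinuousLinearMap.mul_apply, map_sub]
      abel
    have h1 : Tendsto (fun n => pApply D ((u n * a - a) ↑k) - (u n * a - a) (D.adjoint k))
        atTop (𝓝 0) := by
      have hlim := hε0.mul_const ‖(k : H)‖
      rw [zero_mul] at hlim
      exact squeeze_zero_norm (fun n => hεb n k) hlim
    have h2 : Tendsto (fun n => w - u n w) atTop (𝓝 0) := by
      have := (hstrong w).neg
      rw [neg_zero] at this
      exact this.congr fun n => by abel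
    have := h1.add h2
    rw [add_zero] at this
    exact this.congr fun n => (key n).symm
  -- span property
  have hK : ∀ s ∈ K, s ∈ D.adjoint.domain ∧ Tendsto (fun n => ψ n s) atTop (𝓝 0) := by
    intro s hs
    induction hs using Submodule.span_induction with
    | mem x hx =>
      obtain ⟨a, ha, k, rfl⟩ := hx
      exact ⟨hDsub (hmap a ha _ k.2), hgen a ha k⟩
    | zero =>
      refine ⟨zero_mem _, ?_⟩
      have : ∀ n, ψ n (0 : H) = 0 := by
        intro n
        simp [hψdef, pApply_zero]
      simpa [this] using (tendsto_const_nhds : Tendsto (fun _ : ℕ => (0 : H)) atTop _)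
    | add x y hx hy ihx ihy =>
      refine ⟨add_mem ihx.1 ihy.1, ?_⟩
      have := ihx.2.add ihy.2
      rw [add_zero] at this
      exact this.congr fun n => (hψ_add n x y ihx.1 ihy.1).symm
    | smul c x hx ihx =>
      refine ⟨Submodule.smul_mem _ c ihx.1, ?_⟩
      have := ihx.2.const_smul c
      rw [smul_zero] at this
      exact this.congr fun n => (hψ_smul n c x ihx.1).symm
  -- key convergence on all of Dom D*
  have hkey : ∀ h : D.adjoint.domain,
      Tendsto (fun n => pApply D (u n ↑h) - u n (D.adjoint h)) atTop (𝓝 0) := by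
    intro h
    have hmain : Tendsto (fun n => ψ n ↑h) atTop (𝓝 0) := by
      apply tendsto_zero_of_approx
      intro ε hε
      obtain ⟨s, hsK, hs⟩ : ∃ s ∈ K, ‖(h : H) - s‖ ≤ ε / (C + 1) := by
        have hx := hKdense (h : H)
        rw [Metric.mem_closure_iff] at hx
        obtain ⟨s, hs1, hs2⟩ := hx (ε / (C + 1)) (by positivity)
        exact ⟨s, hs1, by rw [← dist_eq_norm]; exact hs2.le⟩
      obtain ⟨hsdom, hstend⟩ := hK s hsK
      refine ⟨fun n => ψ n s, hstend, fun n => ?_⟩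
      rw [← hψ_sub n ↑h s h.2 hsdom]
      calc ‖ψ n (↑h - s)‖ ≤ C * ‖(h : H) - s‖ := hψ_bound n _ (sub_mem h.2 hsdom)
        _ ≤ C * (ε / (C + 1)) := by gcongr
        _ ≤ (C + 1) * (ε / (C + 1)) := by
            have hd : (0 : ℝ) ≤ ε / (C + 1) := by positivity
            nlinarith
        _ = ε := by field_simp
    refine hmain.congr fun n => ?_
    simp only [hψdef, hpadj h]
  -- conclude: D.adjoint ≤ D via closedness
  have hmemgraph : ∀ h : D.adjoint.domain, ((h : H), D.adjoint h) ∈ D.graph := by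
    intro h
    have h1 : Tendsto (fun n => u n ↑h) atTop (𝓝 (h : H)) := hstrong' ↑h
    have h2 : Tendsto (fun n => pApply D (u n ↑h)) atTop (𝓝 (D.adjoint h)) := by
      have h3 : Tendsto (fun n => u n (D.adjoint h)) atTop (𝓝 (D.adjoint h)) := hstrong' _
      have := (hkey h).add h3
      rw [zero_add] at this
      exact this.congr fun n => by abel
    have hcl : ((h : H), D.adjoint h) ∈ closure (D.graph : Set (H × H)) := by
      apply mem_closure_of_tendsto (h1.prodMk_nhds h2)
      filter_upwards with n
      have hmem : u n ↑h ∈ D.domain := hmap _ (hu n) _ h.2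
      show (u n ↑h, pApply D (u n ↑h)) ∈ (D.graph : Set (H × H))
      rw [pApply_mem D hmem]
      exact D.mem_graph ⟨u n ↑h, hmem⟩
    rwa [hclosed.closure_eq] at hcl
  have hadj_le : D.adjoint ≤ D := by
    constructor
    · intro x hx
      obtain ⟨y, hy1, _⟩ := (D.mem_graph_iff).mp (hmemgraph ⟨x, hx⟩)
      have hy1' : (y : H) = x := hy1
      exact hy1' ▸ y.2
    · intro x y hxy
      obtain ⟨z, hz1, hz2⟩ := (D.mem_graph_iff).mp (hmemgraph x)
      have hz1' : (z : H) = (x : H) := hz1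
      have hz2' : D z = D.adjoint x := hz2
      have hzy : z = y := Subtype.ext (hz1'.trans hxy)
      rw [← hz2', hzy]
  exact le_antisymm hadj_le hsym
end
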